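/- arXiv:1504.01080 — 3 statements merged into one kernel-verified Lean document; each statement's English description precedes it below -/
import Mathlib

section
/- For every c > 0, the function φ̄(r) = 2 arctan(r/c) satisfies, for all r > 0, the identity r φ̄'(r) − φ̄''(r) − φ̄'(r)/r + sin(2φ̄(r))/(2r²) = 2rc/(c² + r²); in particular this quantity is nonnegative for r ∈ [0,1], so the time-independent function (r,t) ↦ 2 arctan(r/c) is a supersolution of the drifted harmonic map heat equation φ_t + r φ_r = φ_rr + φ_r/r − sin(2φ)/(2r²) on (0,1) × (0,∞). -/
open Set Real

noncomputable section

theorem Real.sin_two_mul_arctan (x : ℝ) : sin (2 * arctan x) = 2 * x / (1 + x ^ 2) := by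
  have hcos : cos (arctan x) ≠ 0 := (cos_arctan_pos x).ne'
  rw [sin_two_mul, ← tan_mul_cos hcos, tan_arctan, mul_assoc, mul_assoc, ← sq, cos_sq_arctan]
  ring

theorem Real.cos_two_mul_arctan (x : ℝ) : cos (2 * arctan x) = (1 - x ^ 2) / (1 + x ^ 2) := by
  rw [cos_two_mul, cos_sq_arctan]
  field_simp
  ring

theorem Real.sin_two_mul_two_mul_arctan (x : ℝ) :
    sin (2 * (2 * arctan x)) = 4 * x * (1 - x ^ 2) / (1 + x ^ 2) ^ 2 := by
  rw [sin_two_mul, sin_two_mul_arctan, cos_two_mul_arctan]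
  field_simp
  ring

section ArctanProfile

variable {c : ℝ} (hc : c ≠ 0)
include hc

theorem hasDerivAt_two_mul_arctan_div (r : ℝ) :
    HasDerivAt (fun s => 2 * arctan (s / c)) (2 * c / (c ^ 2 + r ^ 2)) r :=
  ((hasDerivAt_id' r).div_const c).arctan.const_mul 2 |>.congr_deriv (by field_simp)

theorem deriv_two_mul_arctan_div :
    deriv (fun s => 2 * arctan (s / c)) = fun r => 2 * c / (c ^ 2 + r ^ 2) :=
  funext fun r => (hasDerivAt_two_mul_arctan_div hc r).deriv

theorem deriv_deriv_two_mul_arctan_div (r : ℝ) :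
    deriv (deriv (fun s => 2 * arctan (s / c))) r = -(4 * c * r) / (c ^ 2 + r ^ 2) ^ 2 := by
  have hden : c ^ 2 + r ^ 2 ≠ 0 := by positivity
  have h : HasDerivAt (fun s => 2 * c / (c ^ 2 + s ^ 2)) (-(4 * c * r) / (c ^ 2 + r ^ 2) ^ 2) r :=
    ((hasDerivAt_const r (2 * c)).fun_div ((hasDerivAt_pow 2 r).const_add (c ^ 2)) hden).congr_deriv
      (by norm_num; ring)
  rw [deriv_two_mul_arctan_div hc, h.deriv]

theorem drifted_residual_two_mul_arctan_div {r : ℝ} (hr : r ≠ 0) :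
    r * deriv (fun s => 2 * arctan (s / c)) r
        - deriv (deriv (fun s => 2 * arctan (s / c))) r
        - deriv (fun s => 2 * arctan (s / c)) r / r
        + sin (2 * (2 * arctan (r / c))) / (2 * r ^ 2)
      = 2 * r * c / (c ^ 2 + r ^ 2) := by
  rw [deriv_deriv_two_mul_arctan_div hc, deriv_two_mul_arctan_div hc,
    sin_two_mul_two_mul_arctan]
  have hden : c ^ 2 + r ^ 2 ≠ 0 := by positivity
  field_simp
  ring

end ArctanProfile

/-- Supersolution property of `r ↦ 2 arctan (r/c)` for the drifted harmonic map heat flow. -/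
theorem stmt_9 (c : ℝ) (hc : 0 < c) :
    (∀ r : ℝ, 0 < r →
      r * deriv (fun s => 2 * arctan (s / c)) r
        - deriv (deriv (fun s => 2 * arctan (s / c))) r
        - deriv (fun s => 2 * arctan (s / c)) r / r
        + Real.sin (2 * (2 * arctan (r / c))) / (2 * r ^ 2)
        = 2 * r * c / (c ^ 2 + r ^ 2)) ∧
    (∀ r ∈ Icc (0:ℝ) 1, 0 ≤ 2 * r * c / (c ^ 2 + r ^ 2)) ∧
    (∀ r ∈ Ioo (0:ℝ) 1, ∀ t : ℝ, 0 < t →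
      deriv (fun _ : ℝ => 2 * arctan (r / c)) t + r * deriv (fun s => 2 * arctan (s / c)) r
        ≥ deriv (deriv (fun s => 2 * arctan (s / c))) r
          + deriv (fun s => 2 * arctan (s / c)) r / r
          - Real.sin (2 * (2 * arctan (r / c))) / (2 * r ^ 2)) := by
  have residual_nonneg : ∀ r, 0 ≤ r → 0 ≤ 2 * r * c / (c ^ 2 + r ^ 2) := fun r hr => by
    positivity
  refine ⟨fun r hr => drifted_residual_two_mul_arctan_div hc.ne' hr.ne',
    fun r hr => residual_nonneg r hr.1, fun r hr t _ => ?_⟩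
  have h := drifted_residual_two_mul_arctan_div hc.ne' hr.1.ne'
  rw [deriv_const]
  linarith [residual_nonneg r hr.1.le]

end
end

section
/- Let φ₀ : [0,1] → ℝ be a smooth function with φ₀(0) = 0 and φ₀(r) < π for all r ∈ (0,1]. Then there exists c > 0 such that φ₀(r) ≤ 2 arctan(r/c) for all r ∈ [0,1]. Similarly, if φ₀(0) = 0 and φ₀(r) > −π for all r ∈ (0,1], then there exists c > 0 such that φ₀(r) ≥ −2 arctan(r/c) = 2 arctan(−r/c) for all r ∈ [0,1]. -/
open Set Real

noncomputable section

lemma aux_le_two_arctan {x : ℝ} (hx0 : 0 ≤ x) (hx1 : x ≤ 1) : x ≤ 2 * arctan x := by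
  have hmono : MonotoneOn (fun x : ℝ => 2 * arctan x - x) (Icc 0 1) := by
    apply monotoneOn_of_deriv_nonneg (convex_Icc 0 1)
    · exact ((Real.continuous_arctan.continuousOn.const_smul (2:ℝ)).sub continuousOn_id)
    · intro x hx
      exact ((((Real.hasDerivAt_arctan x).const_mul 2).sub (hasDerivAt_id x)).differentiableAt).differentiableWithinAt
    · intro x hx
      rw [interior_Icc] at hx
      have hd : deriv (fun x : ℝ => 2 * arctan x - x) x = 2 * (1 / (1 + x ^ 2)) - 1 :=
        (((Real.hasDerivAt_arctan x).const_mul 2).sub (hasDerivAt_id x)).deriv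
      rw [hd]
      have h1 : (0:ℝ) < 1 + x ^ 2 := by positivity
      rw [sub_nonneg, mul_one_div, le_div_iff₀ h1]
      nlinarith [hx.1, hx.2]
  have := hmono (left_mem_Icc.mpr (by norm_num)) ⟨hx0, hx1⟩ hx0
  simp only [Real.arctan_zero, mul_zero, sub_zero] at this
  linarith

lemma key (φ₀ : ℝ → ℝ) (hφ₀ : ContDiffOn ℝ (⊤ : ℕ∞) φ₀ (Icc 0 1)) (h0 : φ₀ 0 = 0)
    (h : ∀ r ∈ Ioc (0:ℝ) 1, φ₀ r < π) :
    ∃ c : ℝ, 0 < c ∧ ∀ r ∈ Icc (0:ℝ) 1, φ₀ r ≤ 2 * arctan (r / c) := by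
  -- Lipschitz-type linear bound
  have hconv : Convex ℝ (Icc (0:ℝ) 1) := convex_Icc 0 1
  have hud : UniqueDiffOn ℝ (Icc (0:ℝ) 1) := uniqueDiffOn_Icc (by norm_num)
  have h1 : ContDiffOn ℝ 1 φ₀ (Icc 0 1) := hφ₀.of_le (by simp)
  have hderivcont : ContinuousOn (fun x => ‖fderivWithin ℝ φ₀ (Icc 0 1) x‖) (Icc 0 1) :=
    (h1.continuousOn_fderivWithin hud le_rfl).norm
  obtain ⟨B, hB⟩ := (isCompact_Icc).exists_bound_of_continuousOn hderivcont
  set L : ℝ := max B 0 + 1 with hLdef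
  have hLpos : 0 < L := by positivity
  have hL1 : 1 ≤ L := by rw [hLdef]; linarith [le_max_right B 0]
  have hlin : ∀ r ∈ Icc (0:ℝ) 1, φ₀ r ≤ L * r := by
    intro r hr
    have hbd : ∀ x ∈ Icc (0:ℝ) 1, ‖fderivWithin ℝ φ₀ (Icc 0 1) x‖ ≤ L := by
      intro x hx
      have h2 := hB x hx
      rw [Real.norm_eq_abs, abs_of_nonneg (norm_nonneg _)] at h2
      calc ‖fderivWithin ℝ φ₀ (Icc 0 1) x‖ ≤ B := h2
        _ ≤ L := by simp [hLdef]; linarith [le_max_left B 0]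
    have := hconv.norm_image_sub_le_of_norm_fderivWithin_le
      (h1.differentiableOn one_ne_zero) hbd (left_mem_Icc.mpr (by norm_num)) hr
    rw [h0, sub_zero, sub_zero, Real.norm_eq_abs, Real.norm_eq_abs,
      abs_of_nonneg hr.1] at this
    calc φ₀ r ≤ |φ₀ r| := le_abs_self _
      _ ≤ L * r := this
  -- threshold
  set ε : ℝ := 1 / L with hεdef
  have hεpos : 0 < ε := by positivity
  have hε1 : ε ≤ 1 := by rw [hεdef, div_le_one hLpos]; exact hL1
  have hεL : L * ε = 1 := by rw [hεdef]; field_simp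
  -- max on [ε, 1]
  have hcont : ContinuousOn φ₀ (Icc ε 1) :=
    hφ₀.continuousOn.mono (Icc_subset_Icc hεpos.le le_rfl)
  obtain ⟨x₀, hx₀mem, hx₀max⟩ := isCompact_Icc.exists_isMaxOn
    (nonempty_Icc.mpr hε1) hcont
  set M : ℝ := φ₀ x₀ with hMdef
  have hMlt : M < π := h x₀ ⟨lt_of_lt_of_le hεpos hx₀mem.1, hx₀mem.2⟩
  set T : ℝ := max (tan (M / 2)) 1 with hTdef
  have hT1 : (1:ℝ) ≤ T := le_max_right _ _
  have hTpos : 0 < T := lt_of_lt_of_le one_pos hT1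
  refine ⟨min (1 / L) (ε / T), lt_min (by positivity) (by positivity), ?_⟩
  set c : ℝ := min (1 / L) (ε / T) with hcdef
  have hcpos : 0 < c := lt_min (by positivity) (by positivity)
  have hcL : c ≤ 1 / L := min_le_left _ _
  have hcε : c ≤ ε := le_trans (min_le_right _ _)
    (div_le_self hεpos.le hT1)
  have hεcT : T ≤ ε / c := by
    rw [le_div_iff₀ hcpos, ← le_div_iff₀' hTpos]
    exact min_le_right _ _
  -- arctan(ε/c) ≥ M/2
  have hεc2 : M ≤ 2 * arctan (ε / c) := by
    rcases le_or_gt M 0 with hM | hM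
    · have h2 : arctan 0 < arctan (ε / c) := Real.arctan_strictMono (by positivity)
      rw [Real.arctan_zero] at h2
      linarith
    · have hM2 : M / 2 < π / 2 := by linarith
      have hM2' : -(π / 2) < M / 2 := by linarith [Real.pi_pos]
      have heq := Real.arctan_tan hM2' hM2
      have hmono := Real.arctan_strictMono.monotone
        (le_trans (le_max_left (tan (M/2)) 1) hεcT)
      rw [heq] at hmono
      linarith
  intro r hr
  rcases le_or_gt ε r with hcase | hcase
  · -- r ≥ ε
    have ha : φ₀ r ≤ M := hx₀max ⟨hcase, hr.2⟩
    have hb : arctan (ε / c) ≤ arctan (r / c) :=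
      Real.arctan_strictMono.monotone (by gcongr)
    linarith
  · have hlinr : φ₀ r ≤ L * r := hlin r hr
    rcases le_or_gt r c with hrc | hrc
    · -- r ≤ c : use x ≤ 2 arctan x
      have ha : r / c ≤ 1 := (div_le_one hcpos).mpr hrc
      have hb : r / c ≤ 2 * arctan (r / c) :=
        aux_le_two_arctan (div_nonneg hr.1 hcpos.le) ha
      have hcL' : c * L ≤ 1 := by rw [← le_div_iff₀ hLpos]; exact hcL
      have hc3 : L * r ≤ r / c := by
        rw [le_div_iff₀ hcpos]
        nlinarith [mul_le_mul_of_nonneg_right hcL' hr.1]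
      exact le_trans hlinr (le_trans hc3 hb)
    · -- r > c : arctan(r/c) ≥ arctan 1 = π/4
      have ha : (1:ℝ) ≤ r / c := (one_le_div hcpos).mpr hrc.le
      have hb : arctan 1 ≤ arctan (r / c) := Real.arctan_strictMono.monotone ha
      rw [Real.arctan_one] at hb
      have hc3 : L * r ≤ 1 := by
        calc L * r ≤ L * ε := mul_le_mul_of_nonneg_left hcase.le hLpos.le
          _ = 1 := hεL
      nlinarith [Real.pi_gt_three]

/-- Any smooth `φ₀` on `[0,1]` with `φ₀(0) = 0` that stays below `π` (resp. above `-π`)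
on `(0,1]` is dominated by `2 arctan(r/c)` (resp. dominates `2 arctan(-r/c)`) for some
small `c > 0`. -/
theorem stmt_10 (φ₀ : ℝ → ℝ) (hφ₀ : ContDiffOn ℝ (⊤ : ℕ∞) φ₀ (Icc 0 1)) (h0 : φ₀ 0 = 0) :
    ((∀ r ∈ Ioc (0:ℝ) 1, φ₀ r < π) →
      ∃ c : ℝ, 0 < c ∧ ∀ r ∈ Icc (0:ℝ) 1, φ₀ r ≤ 2 * arctan (r / c)) ∧
    ((∀ r ∈ Ioc (0:ℝ) 1, -π < φ₀ r) →
      ∃ c : ℝ, 0 < c ∧ ∀ r ∈ Icc (0:ℝ) 1, 2 * arctan (-r / c) ≤ φ₀ r) := by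
  constructor
  · exact key φ₀ hφ₀ h0
  · intro h
    obtain ⟨c, hc, hineq⟩ := key (fun r => -φ₀ r) (hφ₀.neg) (by simp [h0])
      (fun r hr => by linarith [h r hr])
    refine ⟨c, hc, fun r hr => ?_⟩
    have h2 := hineq r hr
    rw [neg_div, Real.arctan_neg]
    linarith

end
end

section
/- Let ε ∈ (0,1), δ > 0, β₀ > 0 satisfy 0 < 2β₀^{1−ε} < δ(1−ε), and set T₀ = ½ ln(δ(1−ε)/(δ(1−ε) − 2β₀^{1−ε})) ∈ (0, ∞). Define β : [0, T₀) → ℝ by β(t) = (δ(1−ε)/2 · (e^{−2t} − 1) + β₀^{1−ε})^{1/(1−ε)}. Then β is positive on [0,T₀), solves the ODE β'(t) = −δ e^{−2t} β(t)^ε with β(0) = β₀, β(t) → 0 as t → T₀⁻, and consequently 2/(e^t β(t)) → +∞ as t → T₀⁻. -/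
open Set Real Filter

noncomputable section

/-- The blow-up time `T₀ = ½ ln(δ(1−ε)/(δ(1−ε) − 2β₀^{1−ε}))`. -/
def blowupTime (ε δ β₀ : ℝ) : ℝ :=
  (1 / 2) * Real.log (δ * (1 - ε) / (δ * (1 - ε) - 2 * β₀ ^ (1 - ε)))

/-- The solution `β(t) = (δ(1−ε)/2 (e^{−2t} − 1) + β₀^{1−ε})^{1/(1−ε)}` of the ODE
`β' = −δ e^{−2t} β^ε`, `β(0) = β₀`. -/
def betaFun (ε δ β₀ : ℝ) (t : ℝ) : ℝ :=
  (δ * (1 - ε) / 2 * (Real.exp (-2 * t) - 1) + β₀ ^ (1 - ε)) ^ (1 / (1 - ε))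

/-!
Substituting `u = β^{1-ε}` turns the Bernoulli-type equation `β' = −δ e^{−2t} β^ε` into the
linear equation `u' = −δ(1−ε) e^{−2t}`, solved by the base `u` of `betaFun`. This base is
strictly decreasing and vanishes exactly at `T₀`, so `β = u^{1/(1−ε)}` is positive before `T₀`
and tends to `0` there, which makes `2 / (e^t β(t))` blow up.
-/

def betaBase (ε δ β₀ : ℝ) (t : ℝ) : ℝ :=
  δ * (1 - ε) / 2 * (Real.exp (-2 * t) - 1) + β₀ ^ (1 - ε)

theorem HasDerivAt.rpow_one_div_one_sub {f : ℝ → ℝ} {f' x ε : ℝ} (hf : HasDerivAt f f' x)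
    (hx : 0 < f x) (hε : ε ≠ 1) :
    HasDerivAt (fun y => f y ^ (1 / (1 - ε))) (f' / (1 - ε) * (f x ^ (1 / (1 - ε))) ^ ε) x := by
  have hε' : 1 - ε ≠ 0 := sub_ne_zero.mpr hε.symm
  have hexp : 1 / (1 - ε) - 1 = 1 / (1 - ε) * ε := by field_simp; ring
  refine (hf.rpow_const (p := 1 / (1 - ε)) (Or.inl hx.ne')).congr_deriv ?_
  rw [hexp, Real.rpow_mul hx.le]
  ring

theorem Filter.Tendsto.const_div_mul_atTop {α : Type*} {l : Filter α} {u v : α → ℝ} {c k : ℝ}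
    (hk : 0 < k) (hv : Tendsto v l (nhds c)) (hv_pos : ∀ᶠ x in l, 0 < v x)
    (hu : Tendsto u l (nhds 0)) (hu_pos : ∀ᶠ x in l, 0 < u x) :
    Tendsto (fun x => k / (v x * u x)) l atTop := by
  have hvu : Tendsto (fun x => v x * u x) l (nhdsWithin 0 (Ioi 0)) := by
    refine tendsto_nhdsWithin_iff.mpr ⟨by simpa using hv.mul hu, ?_⟩
    filter_upwards [hv_pos, hu_pos] with x hvx hux
    exact mul_pos hvx hux
  refine (hvu.inv_tendsto_nhdsGT_zero.const_mul_atTop hk).congr fun x => ?_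
  simp only [Pi.inv_apply, div_eq_mul_inv]

section

variable {ε δ β₀ : ℝ}

theorem betaFun_eq_betaBase_rpow (t : ℝ) :
    betaFun ε δ β₀ t = betaBase ε δ β₀ t ^ (1 / (1 - ε)) :=
  rfl

theorem betaFun_zero (hβ₀ : 0 ≤ β₀) (hε : ε ≠ 1) : betaFun ε δ β₀ 0 = β₀ := by
  have hε' : 1 - ε ≠ 0 := sub_ne_zero.mpr hε.symm
  simp only [betaFun, mul_zero, Real.exp_zero, sub_self, zero_add, one_div]
  exact Real.rpow_rpow_inv hβ₀ hε'

theorem hasDerivAt_betaBase (t : ℝ) :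
    HasDerivAt (betaBase ε δ β₀) (-(δ * (1 - ε)) * Real.exp (-2 * t)) t := by
  have hexp : HasDerivAt (fun s => Real.exp (-2 * s)) (Real.exp (-2 * t) * -2) t := by
    simpa using ((hasDerivAt_id t).const_mul (-2 : ℝ)).exp
  exact (((hexp.sub_const 1).const_mul (δ * (1 - ε) / 2)).add_const (β₀ ^ (1 - ε))).congr_deriv
    (by ring)

theorem hasDerivAt_betaFun (hε : ε ≠ 1) {t : ℝ} (ht : 0 < betaBase ε δ β₀ t) :
    HasDerivAt (betaFun ε δ β₀) (-δ * Real.exp (-2 * t) * betaFun ε δ β₀ t ^ ε) t := by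
  have hε' : 1 - ε ≠ 0 := sub_ne_zero.mpr hε.symm
  refine ((hasDerivAt_betaBase t).rpow_one_div_one_sub ht hε).congr_deriv ?_
  rw [betaFun_eq_betaBase_rpow]
  field_simp

theorem betaBase_strictAnti (hA : 0 < δ * (1 - ε)) : StrictAnti (betaBase ε δ β₀) := by
  intro s t hst
  have : Real.exp (-2 * t) < Real.exp (-2 * s) := Real.exp_lt_exp.mpr (by linarith)
  unfold betaBase
  gcongr

theorem exp_neg_two_mul_blowupTime (hβ₀ : 0 < β₀) (hcon : 2 * β₀ ^ (1 - ε) < δ * (1 - ε)) :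
    Real.exp (-2 * blowupTime ε δ β₀) =
      (δ * (1 - ε) - 2 * β₀ ^ (1 - ε)) / (δ * (1 - ε)) := by
  have hB : 0 < β₀ ^ (1 - ε) := Real.rpow_pos_of_pos hβ₀ _
  have hratio : 0 < δ * (1 - ε) / (δ * (1 - ε) - 2 * β₀ ^ (1 - ε)) :=
    div_pos (by linarith) (by linarith)
  rw [blowupTime, ← mul_assoc, show (-2 : ℝ) * (1 / 2) = -1 by norm_num, neg_one_mul,
    Real.exp_neg, Real.exp_log hratio, inv_div]

theorem betaBase_blowupTime (hβ₀ : 0 < β₀) (hcon : 2 * β₀ ^ (1 - ε) < δ * (1 - ε)) :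
    betaBase ε δ β₀ (blowupTime ε δ β₀) = 0 := by
  have hB : 0 < β₀ ^ (1 - ε) := Real.rpow_pos_of_pos hβ₀ _
  have hA : δ * (1 - ε) ≠ 0 := by linarith
  rw [betaBase, exp_neg_two_mul_blowupTime hβ₀ hcon]
  generalize δ * (1 - ε) = A at hA ⊢
  field_simp
  ring

theorem blowupTime_pos (hβ₀ : 0 < β₀) (hcon : 2 * β₀ ^ (1 - ε) < δ * (1 - ε)) :
    0 < blowupTime ε δ β₀ := by
  have hB : 0 < β₀ ^ (1 - ε) := Real.rpow_pos_of_pos hβ₀ _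
  have hden : 0 < δ * (1 - ε) - 2 * β₀ ^ (1 - ε) := by linarith
  exact mul_pos one_half_pos (Real.log_pos ((one_lt_div hden).mpr (by linarith)))

theorem betaBase_pos_of_lt_blowupTime (hβ₀ : 0 < β₀)
    (hcon : 2 * β₀ ^ (1 - ε) < δ * (1 - ε)) {t : ℝ} (ht : t < blowupTime ε δ β₀) :
    0 < betaBase ε δ β₀ t := by
  have hA : 0 < δ * (1 - ε) := lt_trans (by positivity) hcon
  rw [← betaBase_blowupTime hβ₀ hcon]
  exact betaBase_strictAnti hA ht

theorem tendsto_betaFun_blowupTime (hε : ε < 1) (hβ₀ : 0 < β₀)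
    (hcon : 2 * β₀ ^ (1 - ε) < δ * (1 - ε)) :
    Tendsto (betaFun ε δ β₀) (nhds (blowupTime ε δ β₀)) (nhds 0) := by
  have hp : 0 < 1 / (1 - ε) := one_div_pos.mpr (sub_pos.mpr hε)
  have hbase : Tendsto (betaBase ε δ β₀) (nhds (blowupTime ε δ β₀)) (nhds 0) := by
    rw [← betaBase_blowupTime hβ₀ hcon]
    exact (hasDerivAt_betaBase _).continuousAt.tendsto
  have := hbase.rpow_const (Or.inr hp.le)
  rwa [Real.zero_rpow hp.ne'] at this

end

theorem stmt_12_general (ε δ β₀ : ℝ) (hε : ε ∈ Ioo (0:ℝ) 1) (hβ₀ : 0 < β₀)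
    (hcon : 2 * β₀ ^ (1 - ε) < δ * (1 - ε)) :
    0 < blowupTime ε δ β₀ ∧
    (∀ t ∈ Ico (0:ℝ) (blowupTime ε δ β₀), 0 < betaFun ε δ β₀ t) ∧
    betaFun ε δ β₀ 0 = β₀ ∧
    (∀ t ∈ Ico (0:ℝ) (blowupTime ε δ β₀),
      HasDerivAt (betaFun ε δ β₀) (-δ * Real.exp (-2 * t) * betaFun ε δ β₀ t ^ ε) t) ∧
    Tendsto (betaFun ε δ β₀) (nhdsWithin (blowupTime ε δ β₀) (Iio (blowupTime ε δ β₀)))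
      (nhds 0) ∧
    Tendsto (fun t => 2 / (Real.exp t * betaFun ε δ β₀ t))
      (nhdsWithin (blowupTime ε δ β₀) (Iio (blowupTime ε δ β₀))) atTop := by
  have hε1 : ε ≠ 1 := hε.2.ne
  have hpos : ∀ t < blowupTime ε δ β₀, 0 < betaFun ε δ β₀ t := fun t ht =>
    Real.rpow_pos_of_pos (betaBase_pos_of_lt_blowupTime hβ₀ hcon ht) _
  have hlim : Tendsto (betaFun ε δ β₀)
      (nhdsWithin (blowupTime ε δ β₀) (Iio (blowupTime ε δ β₀))) (nhds 0) :=
    (tendsto_betaFun_blowupTime hε.2 hβ₀ hcon).mono_left nhdsWithin_le_nhds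
  refine ⟨blowupTime_pos hβ₀ hcon, fun t ht => hpos t ht.2, betaFun_zero hβ₀.le hε1,
    fun t ht => hasDerivAt_betaFun hε1 (betaBase_pos_of_lt_blowupTime hβ₀ hcon ht.2), hlim, ?_⟩
  exact Tendsto.const_div_mul_atTop two_pos
    (Real.continuous_exp.tendsto _ |>.mono_left nhdsWithin_le_nhds)
    (Eventually.of_forall Real.exp_pos) hlim
    (eventually_nhdsWithin_of_forall fun t ht => hpos t ht)

theorem stmt_12 (ε δ β₀ : ℝ) (hε : ε ∈ Ioo (0:ℝ) 1) (hδ : 0 < δ) (hβ₀ : 0 < β₀)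
    (hcon : 2 * β₀ ^ (1 - ε) < δ * (1 - ε)) :
    0 < blowupTime ε δ β₀ ∧
    (∀ t ∈ Ico (0:ℝ) (blowupTime ε δ β₀), 0 < betaFun ε δ β₀ t) ∧
    betaFun ε δ β₀ 0 = β₀ ∧
    (∀ t ∈ Ico (0:ℝ) (blowupTime ε δ β₀),
      HasDerivAt (betaFun ε δ β₀) (-δ * Real.exp (-2 * t) * betaFun ε δ β₀ t ^ ε) t) ∧
    Tendsto (betaFun ε δ β₀) (nhdsWithin (blowupTime ε δ β₀) (Iio (blowupTime ε δ β₀)))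
      (nhds 0) ∧
    Tendsto (fun t => 2 / (Real.exp t * betaFun ε δ β₀ t))
      (nhdsWithin (blowupTime ε δ β₀) (Iio (blowupTime ε δ β₀))) atTop :=
  stmt_12_general ε δ β₀ hε hβ₀ hcon
end
end
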